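/- arXiv:1306.1935 — 4 statements merged into one kernel-verified Lean document; each statement's English description precedes it below -/
import Mathlib

section
/- Let λ ≥ 1 be a cardinal and let B⁰_λ(S) be a topological Brandt λ⁰-extension of a semitopological monoid S with zero, in the class of Hausdorff semitopological semigroups. If the space B⁰_λ(S) is pseudocompact (resp. countably pracompact, countably compact, sequentially compact, compact), then so is S. -/
open Topology Set Filter

/-- The underlying set of the Brandt `λ⁰`-extension `B⁰_λ(S)`:
nonzero elements are triples `(α, s, β)` with `s ≠ 0`, and `none` is the zero. -/
abbrev Brandt (S : Type*) [Zero S] (lam : Type*) : Type _ :=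
  Option (lam × {s : S // s ≠ 0} × lam)

open Classical in
/-- Multiplication of the Brandt `λ⁰`-extension. -/
noncomputable def brandtMul {S : Type*} [MonoidWithZero S] {lam : Type*} :
    Brandt S lam → Brandt S lam → Brandt S lam
  | some (α, a, β), some (γ, b, δ) =>
      if h : β = γ ∧ a.1 * b.1 ≠ 0 then some (α, ⟨a.1 * b.1, h.2⟩, δ) else none
  | _, _ => none

/-- The set `S*_{α,β}` of nonzero elements of the `(α,β)` sheet. -/
def sheet {S : Type*} [Zero S] {lam : Type*} (α β : lam) : Set (Brandt S lam) :=
  {x | ∃ s : {s : S // s ≠ 0}, x = some (α, s, β)}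

/-- The sheet `S_{α,β} = S*_{α,β} ∪ {0}`. -/
def sheet0 {S : Type*} [Zero S] {lam : Type*} (α β : lam) : Set (Brandt S lam) :=
  sheet α β ∪ {none}

/-- The trace `(U)*_{α,β}` of a subset `U ⊆ S` on the `(α,β)` sheet (zero removed). -/
def sheetTrace {S : Type*} [Zero S] {lam : Type*} (α β : lam) (U : Set S) :
    Set (Brandt S lam) :=
  {x | ∃ s : {s : S // s ≠ 0}, s.1 ∈ U ∧ x = some (α, s, β)}

/-- The basic neighbourhood `U_A(0)` of zero: all sheets outside the finite set `A`
together with the traces of `U` on the sheets from `A`. -/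
def UA0 {S : Type*} [Zero S] {lam : Type*} (A : Set (lam × lam)) (U : Set S) :
    Set (Brandt S lam) :=
  {x | x = none ∨ ∃ (α β : lam) (s : {s : S // s ≠ 0}),
        x = some (α, s, β) ∧ ((α, β) ∉ A ∨ s.1 ∈ U)}

/-- The canonical topology `τ_B^S` on the Brandt `λ⁰`-extension, generated by the base
consisting of traces of open subsets of `S` on the sheets and of the sets `U_A(0)`. -/
def brandtTop (S : Type*) [Zero S] [TopologicalSpace S] (lam : Type*) :
    TopologicalSpace (Brandt S lam) :=
  TopologicalSpace.generateFrom
    ({W | ∃ (α β : lam) (U : Set S), IsOpen U ∧ W = sheetTrace α β U} ∪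
     {W | ∃ A : Set (lam × lam), A.Finite ∧
        ∃ U : Set S, IsOpen U ∧ (0 : S) ∈ U ∧ W = UA0 A U})

open Classical in
/-- The canonical copy of `S` as the sheet `S_{α,α}` inside `B⁰_λ(S)`. -/
noncomputable def brandtIncl {S : Type*} [Zero S] {lam : Type*} (α : lam) (s : S) :
    Brandt S lam :=
  if h : s = 0 then none else some (α, ⟨s, h⟩, α)

/-- Separate continuity of a multiplication. -/
def SepCont {X : Type*} [TopologicalSpace X] (m : X → X → X) : Prop :=
  ∀ t : X, Continuous (m t) ∧ Continuous (fun x => m x t)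

/-- A family of subsets is locally finite. -/
def SetLocallyFinite {X : Type*} [TopologicalSpace X] (F : Set (Set X)) : Prop :=
  ∀ x : X, ∃ U : Set X, x ∈ U ∧ IsOpen U ∧ {A ∈ F | (A ∩ U).Nonempty}.Finite

/-- `X` is pseudocompact: every locally finite family of nonempty open subsets is finite. -/
def Pseudocompact (X : Type*) [TopologicalSpace X] : Prop :=
  ∀ F : Set (Set X), (∀ U ∈ F, IsOpen U ∧ U.Nonempty) → SetLocallyFinite F → F.Finite

/-- `X` is countably pracompact: there is a dense set `A` such that every infinite
subset of `A` has an accumulation point in `X`. -/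
def CountablyPracompact (X : Type*) [TopologicalSpace X] : Prop :=
  ∃ A : Set X, Dense A ∧ ∀ B ⊆ A, B.Infinite → ∃ x : X, AccPt x (𝓟 B)

/-- `X` is countably compact: every countable open cover has a finite subcover. -/
def CountablyCompactSp (X : Type*) [TopologicalSpace X] : Prop :=
  ∀ F : Set (Set X), F.Countable → (∀ U ∈ F, IsOpen U) → ⋃₀ F = univ →
    ∃ G ⊆ F, G.Finite ∧ ⋃₀ G = univ

/-!
Put `e = (α, 1, α)`. By separate continuity of the multiplication, `x ↦ e · x · e` is a
continuous retraction of `B⁰_λ(S)` onto the sheet `S_{α,α}`, which is homeomorphic to `S`; so `S`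
is a continuous image of `B⁰_λ(S)`. Each of the five properties is preserved by continuous
surjections (for countable pracompactness one uses that the domain is `T₁`).
-/

section ContinuousImage

variable {X Y : Type*} [TopologicalSpace X] [TopologicalSpace Y] {g : X → Y}

theorem Pseudocompact.of_continuous_surjective (hX : Pseudocompact X) (hg : Continuous g)
    (hgs : Function.Surjective g) : Pseudocompact Y := by
  intro F hF hlf
  refine Finite.of_finite_image (f := preimage g) (hX _ ?_ fun x => ?_)
    hgs.preimage_injective.injOn
  · rintro _ ⟨U, hU, rfl⟩
    exact ⟨(hF U hU).1.preimage hg, (hF U hU).2.preimage hgs⟩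
  · obtain ⟨V, hxV, hVo, hVfin⟩ := hlf (g x)
    refine ⟨g ⁻¹' V, hxV, hVo.preimage hg, (hVfin.image (preimage g)).subset ?_⟩
    rintro _ ⟨⟨U, hU, rfl⟩, z, hzU, hzV⟩
    exact ⟨U, ⟨hU, g z, hzU, hzV⟩, rfl⟩

theorem AccPt.sdiff_finite [T1Space X] {x : X} {C t : Set X} (h : AccPt x (𝓟 C))
    (ht : t.Finite) : AccPt x (𝓟 (C \ t)) := by
  have htc : tᶜ ∈ 𝓝[≠] x :=
    compl_eq_univ_sdiff t ▸ nhdsNE_of_nhdsNE_sdiff_finite univ_mem ht.to_subtype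
  exact accPt_iff_frequently_nhdsNE.2 ((accPt_iff_frequently_nhdsNE.1 h).and_eventually htc)

theorem CountablyPracompact.of_continuous_surjective [T1Space X] (hX : CountablyPracompact X)
    (hg : Continuous g) (hgs : Function.Surjective g) : CountablyPracompact Y := by
  obtain ⟨A, hA, hacc⟩ := hX
  refine ⟨g '' A, hgs.denseRange.dense_image hg hA, fun B hBA hB => ?_⟩
  obtain ⟨B', hB'A, hB'⟩ := exists_subset_bijOn (A ∩ g ⁻¹' B) g
  rw [image_inter_preimage, inter_eq_right.2 hBA] at hB'
  obtain ⟨x, hx⟩ := hacc B' (hB'A.trans inter_subset_left) (hB'.image_eq ▸ hB).of_image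
  have hfiber : (B' ∩ g ⁻¹' {g x}).Finite :=
    ((finite_singleton (g x)).subset (image_subset_iff.2 inter_subset_right)).of_finite_image
      (hB'.injOn.mono inter_subset_left)
  refine ⟨g x, accPt_iff_frequently.2 <| (hg.tendsto x).frequently ?_⟩
  refine (accPt_iff_frequently.1 (hx.sdiff_finite hfiber)).mono ?_
  rintro y ⟨-, hyB', hyx⟩
  exact ⟨fun h => hyx ⟨hyB', h⟩, hB'.mapsTo hyB'⟩

theorem CountablyCompactSp.of_continuous_surjective (hX : CountablyCompactSp X)
    (hg : Continuous g) (hgs : Function.Surjective g) : CountablyCompactSp Y := by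
  intro F hF hFo hcov
  have hcov' : ⋃₀ (preimage g '' F) = univ := by
    rw [sUnion_image, ← preimage_iUnion₂, ← sUnion_eq_biUnion, hcov, preimage_univ]
  obtain ⟨G, hGF, hGfin, hGcov⟩ := exists_subset_image_finite_and.1 <|
    hX _ (hF.image _) (by rintro _ ⟨U, hU, rfl⟩; exact (hFo U hU).preimage hg) hcov'
  refine ⟨G, hGF, hGfin, hgs.preimage_injective ?_⟩
  rwa [preimage_univ, preimage_sUnion, ← sUnion_image]

theorem SeqCompactSpace.of_continuous_surjective [SeqCompactSpace X] (hg : Continuous g)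
    (hgs : Function.Surjective g) : SeqCompactSpace Y :=
  ⟨hgs.range_eq ▸ IsSeqCompact.range hg.seqContinuous⟩

end ContinuousImage

open Classical in
noncomputable def brandtProj {S : Type*} [Zero S] {lam : Type*} (α : lam) : Brandt S lam → S
  | some (β, s, γ) => if β = α ∧ γ = α then s.1 else 0
  | none => 0

section BrandtRetraction

variable {S lam : Type*}

theorem brandtProj_brandtIncl [Zero S] (α : lam) (s : S) :
    brandtProj α (brandtIncl α s : Brandt S lam) = s := by
  unfold brandtIncl
  split_ifs with hs
  · exact hs.symm
  · simp [brandtProj]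

variable [MonoidWithZero S]

@[simp]
theorem brandtMul_none_left (x : Brandt S lam) : brandtMul none x = none := by
  cases x <;> rfl

@[simp]
theorem brandtMul_none_right (x : Brandt S lam) : brandtMul x none = none := by
  rcases x with _ | ⟨_, _, _⟩ <;> rfl

open Classical in
theorem brandtMul_brandtIncl_one_left (α β γ : lam) (s : {s : S // s ≠ 0}) :
    brandtMul (brandtIncl α 1) (some (β, s, γ)) = if α = β then some (β, s, γ) else none := by
  have := nontrivial_of_ne _ _ s.2
  split_ifs with h <;> simp [brandtIncl, brandtMul, h, s.2]

open Classical in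
theorem brandtMul_brandtIncl_one_right (α β γ : lam) (s : {s : S // s ≠ 0}) :
    brandtMul (some (β, s, γ)) (brandtIncl α 1) = if γ = α then some (β, s, γ) else none := by
  have := nontrivial_of_ne _ _ s.2
  split_ifs with h <;> simp [brandtIncl, brandtMul, h, s.2]

theorem brandtIncl_brandtProj (α : lam) (x : Brandt S lam) :
    brandtIncl α (brandtProj α x) = brandtMul (brandtMul (brandtIncl α 1) x) (brandtIncl α 1) := by
  rcases x with _ | ⟨β, s, γ⟩
  · simp [brandtProj, brandtIncl]
  · rw [brandtMul_brandtIncl_one_left]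
    split_ifs with hβ
    · rw [brandtMul_brandtIncl_one_right]
      split_ifs with hγ
      · simp [brandtProj, brandtIncl, ← hβ, hγ, s.2]
      · simp [brandtProj, brandtIncl, hγ]
    · simp [brandtProj, brandtIncl, Ne.symm hβ]

theorem continuous_brandtProj [TopologicalSpace S] [TopologicalSpace (Brandt S lam)]
    (hsep : SepCont (brandtMul (S := S) (lam := lam))) {α : lam}
    (hemb : IsEmbedding (brandtIncl (S := S) (lam := lam) α)) :
    Continuous (brandtProj (S := S) α) := by
  simp only [hemb.continuous_iff, Function.comp_def, brandtIncl_brandtProj]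
  exact (hsep _).2.comp (hsep _).1

end BrandtRetraction

theorem brandt_compactness_descends_general {S lam : Type*} [MonoidWithZero S]
    [TopologicalSpace S] [tB : TopologicalSpace (Brandt S lam)]
    [T2Space (Brandt S lam)]
    (hsep : SepCont (brandtMul (S := S) (lam := lam)))
    (alpha : lam) (hemb : Topology.IsEmbedding (brandtIncl (S := S) (lam := lam) alpha)) :
    (Pseudocompact (Brandt S lam) → Pseudocompact S) ∧
    (CountablyPracompact (Brandt S lam) → CountablyPracompact S) ∧
    (CountablyCompactSp (Brandt S lam) → CountablyCompactSp S) ∧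
    (SeqCompactSpace (Brandt S lam) → SeqCompactSpace S) ∧
    (CompactSpace (Brandt S lam) → CompactSpace S) := by
  have hcont := continuous_brandtProj hsep hemb
  have hsurj : Function.Surjective (brandtProj (S := S) (lam := lam) alpha) :=
    Function.LeftInverse.surjective (brandtProj_brandtIncl alpha)
  exact ⟨fun h => h.of_continuous_surjective hcont hsurj,
    fun h => h.of_continuous_surjective hcont hsurj,
    fun h => h.of_continuous_surjective hcont hsurj,
    fun _ => SeqCompactSpace.of_continuous_surjective hcont hsurj,
    fun _ => hsurj.compactSpace hcont⟩

/-- If a topological Brandt extension of a semitopological monoid `S` with zero is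
pseudocompact (resp. countably pracompact, countably compact, sequentially compact,
compact), then so is `S`. -/
theorem brandt_compactness_descends {S lam : Type*} [MonoidWithZero S]
    [TopologicalSpace S] [tB : TopologicalSpace (Brandt S lam)]
    [T2Space (Brandt S lam)]
    (hsep : SepCont (brandtMul (S := S) (lam := lam)))
    (hS : ∀ t : S, Continuous (fun x => t * x) ∧ Continuous (fun x => x * t))
    (alpha : lam) (hemb : Topology.IsEmbedding (brandtIncl (S := S) (lam := lam) alpha)) :
    (Pseudocompact (Brandt S lam) → Pseudocompact S) ∧
    (CountablyPracompact (Brandt S lam) → CountablyPracompact S) ∧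
    (CountablyCompactSp (Brandt S lam) → CountablyCompactSp S) ∧
    (SeqCompactSpace (Brandt S lam) → SeqCompactSpace S) ∧
    (CompactSpace (Brandt S lam) → CompactSpace S) :=
  brandt_compactness_descends_general (tB := tB) hsep alpha hemb
end

section
/- Let λ ≥ 1 be a cardinal and let B⁰_λ(S) be a topological Brandt λ⁰-extension of a semitopological monoid S with zero in the class of semitopological semigroups. If the space B⁰_λ(S) is semiregular and pseudocompact, then for every open neighbourhood U of the zero 0 there exist only finitely many pairs (α,β) ∈ λ × λ such that S_{α,β} ⊄ U. -/
/-!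
Shrink the neighbourhood of zero to a regular open `V = int (cl V)`. Each sheet `S*_{α,β}` is
open, being the set where `(α,1,α) · x · (β,1,β) ≠ 0`; so a sheet not contained in `V` is not
contained in `cl V` either, and `S*_{α,β} \ cl V` is a nonempty open set. These sets form a
locally finite family, since `V` misses all of them and a sheet meets only its own, so
pseudocompactness leaves only finitely many of them.
-/

open Topology Set Filter

/-- A space is semiregular if it has a base of regular open sets. -/
def Semiregular (X : Type*) [TopologicalSpace X] : Prop :=
  ∀ (x : X) (U : Set X), IsOpen U → x ∈ U →
    ∃ V : Set X, x ∈ V ∧ V ⊆ U ∧ V = interior (closure V)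

open Function

section General

variable {X ι : Type*} [TopologicalSpace X]

theorem LocallyFinite.setLocallyFinite_range {W : ι → Set X} (hW : LocallyFinite W) :
    SetLocallyFinite (range W) := by
  intro x
  obtain ⟨t, ht, hfin⟩ := hW x
  refine ⟨interior t, mem_interior_iff_mem_nhds.2 ht, isOpen_interior, (hfin.image W).subset ?_⟩
  rintro _ ⟨⟨i, rfl⟩, hi⟩
  exact ⟨i, hi.mono (inter_subset_inter_right _ interior_subset), rfl⟩

theorem Pseudocompact.finite_of_locallyFinite (hpc : Pseudocompact X) {W : ι → Set X}
    (hW : ∀ i, IsOpen (W i)) (hne : ∀ i, (W i).Nonempty) (hlf : LocallyFinite W) :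
    Finite ι := by
  have hrange : (range W).Finite :=
    hpc _ (by rintro _ ⟨i, rfl⟩; exact ⟨hW i, hne i⟩) hlf.setLocallyFinite_range
  have hfibre : ∀ A ∈ range W, {i | W i = A}.Finite := by
    rintro _ ⟨j, rfl⟩
    obtain ⟨x, hx⟩ := hne j
    exact (hlf.point_finite x).subset fun i (hi : W i = W j) => show x ∈ W i from hi ▸ hx
  rw [← Set.finite_univ_iff]
  exact (hrange.biUnion hfibre).subset fun i _ => mem_biUnion (mem_range_self i) rfl

theorem locallyFinite_of_subset_pairwiseDisjoint {O W : ι → Set X} (hO : ∀ i, IsOpen (O i))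
    (hdisj : Pairwise (Disjoint on O)) (hWO : ∀ i, W i ⊆ O i) {V : Set X} (hV : IsOpen V)
    (hWV : ∀ i, Disjoint (W i) V) (hcover : (⋃ i, O i)ᶜ ⊆ V) : LocallyFinite W := by
  intro x
  by_cases hxV : x ∈ V
  · refine ⟨V, hV.mem_nhds hxV, ?_⟩
    simp only [(hWV _).inter_eq, Set.not_nonempty_empty, ofPred_false, finite_empty]
  · obtain ⟨j, hj⟩ := mem_iUnion.1 (not_not.1 fun h => hxV (hcover h))
    refine ⟨O j, (hO j).mem_nhds hj, (finite_singleton j).subset ?_⟩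
    rintro i ⟨y, hyW, hyO⟩
    by_contra hij
    exact (hdisj hij).le_bot ⟨hWO i hyW, hyO⟩

theorem IsOpen.nonempty_diff_closure {O V : Set X} (hO : IsOpen O)
    (hV : V = interior (closure V)) (hOV : ¬ O ⊆ V) : (O \ closure V).Nonempty := by
  rw [Set.sdiff_nonempty]
  exact fun h => hOV (hV ▸ interior_maximal h hO)

theorem Pseudocompact.finite_not_subset_regularOpen (hpc : Pseudocompact X) {O : ι → Set X}
    (hO : ∀ i, IsOpen (O i)) (hdisj : Pairwise (Disjoint on O)) {V : Set X}
    (hV : V = interior (closure V)) (hcover : (⋃ i, O i)ᶜ ⊆ V) :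
    {i | ¬ O i ⊆ V}.Finite := by
  set P := {i | ¬ O i ⊆ V}
  let W : P → Set X := fun i => O i \ closure V
  have hcoverP : (⋃ i : P, O i)ᶜ ⊆ V := by
    intro x hx
    by_contra hxV
    obtain ⟨i, hi⟩ := mem_iUnion.1 (not_not.1 fun h => hxV (hcover h))
    exact hx (mem_iUnion.2 ⟨⟨i, fun hOV => hxV (hOV hi)⟩, hi⟩)
  have hlf : LocallyFinite W :=
    locallyFinite_of_subset_pairwiseDisjoint (fun i => hO i)
      (hdisj.comp_of_injective Subtype.val_injective) (fun _ => sdiff_subset)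
      (hV ▸ isOpen_interior) (fun _ => disjoint_sdiff_left.mono_right subset_closure) hcoverP
  have : Finite P := hpc.finite_of_locallyFinite (fun i : P => (hO i).sdiff isClosed_closure)
    (fun i => (hO i).nonempty_diff_closure hV i.2) hlf
  exact Set.toFinite P

end General

section Brandt

variable {S lam : Type*}

@[simp]
theorem some_mem_sheet [Zero S] {α β γ δ : lam} {s : {s : S // s ≠ 0}} :
    some (γ, s, δ) ∈ sheet α β ↔ γ = α ∧ δ = β := by
  constructor
  · rintro ⟨t, ht⟩
    simp only [Option.some.injEq, Prod.mk.injEq] at ht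
    exact ⟨ht.1, ht.2.2⟩
  · rintro ⟨rfl, rfl⟩
    exact ⟨s, rfl⟩

@[simp]
theorem none_notMem_sheet [Zero S] {α β : lam} : none ∉ sheet (S := S) α β :=
  fun ⟨_, h⟩ => Option.some_ne_none _ h.symm

theorem pairwise_disjoint_sheet [Zero S] :
    Pairwise (Disjoint on fun p : lam × lam => sheet (S := S) p.1 p.2) := by
  intro p q hne
  refine Set.disjoint_left.2 ?_
  rintro _ ⟨s, rfl⟩ hs
  rw [some_mem_sheet] at hs
  exact hne (Prod.ext hs.1 hs.2)

theorem iUnion_sheet [Zero S] : ⋃ p : lam × lam, sheet (S := S) p.1 p.2 = {none}ᶜ := by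
  ext (_ | ⟨α, s, β⟩) <;> simp

theorem sheet_eq_empty [Zero S] [Subsingleton S] (α β : lam) : sheet (S := S) α β = ∅ :=
  eq_empty_of_forall_notMem fun _ ⟨s, _⟩ => s.2 (Subsingleton.elim _ _)

variable [MonoidWithZero S]

theorem brandtMul_unit_unit_ne_none_iff [Nontrivial S] (α β : lam) (x : Brandt S lam) :
    brandtMul (brandtMul (some (α, ⟨1, one_ne_zero⟩, α)) x) (some (β, ⟨1, one_ne_zero⟩, β))
      ≠ none ↔ x ∈ sheet α β := by
  rcases x with _ | ⟨γ, a, δ⟩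
  · simp [brandtMul]
  · by_cases hγ : α = γ <;> by_cases hδ : δ = β <;> simp [brandtMul, hγ, hδ, a.2, eq_comm]

theorem isOpen_sheet [TopologicalSpace (Brandt S lam)] [T1Space (Brandt S lam)]
    (hsep : SepCont (brandtMul (S := S) (lam := lam))) (α β : lam) :
    IsOpen (sheet (S := S) α β) := by
  cases subsingleton_or_nontrivial S
  · rw [sheet_eq_empty]
    exact isOpen_empty
  · have hcont :=
      (hsep (some (β, ⟨1, one_ne_zero⟩, β))).2.comp (hsep (some (α, ⟨1, one_ne_zero⟩, α))).1
    have hsheet : sheet (S := S) α β = _ ⁻¹' {none}ᶜ :=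
      Set.ext fun x => (brandtMul_unit_unit_ne_none_iff α β x).symm
    exact hsheet ▸ isOpen_compl_singleton.preimage hcont

end Brandt

theorem brandt_semiregular_pseudocompact_nhds_zero_general {S lam : Type*} [MonoidWithZero S]
    [tB : TopologicalSpace (Brandt S lam)]
    [T2Space (Brandt S lam)]
    (hsep : SepCont (brandtMul (S := S) (lam := lam)))
    (hsr : Semiregular (Brandt S lam)) (hpc : Pseudocompact (Brandt S lam)) :
    ∀ U : Set (Brandt S lam), IsOpen U → none ∈ U →
      {p : lam × lam | ¬ (sheet0 (S := S) p.1 p.2 ⊆ U)}.Finite := by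
  intro U hU h0
  obtain ⟨V, h0V, hVU, hVreg⟩ := hsr none U hU h0
  have hcover : (⋃ p : lam × lam, sheet (S := S) p.1 p.2)ᶜ ⊆ V := by
    rwa [iUnion_sheet, compl_compl, singleton_subset_iff]
  refine (hpc.finite_not_subset_regularOpen (fun p => isOpen_sheet hsep p.1 p.2)
    pairwise_disjoint_sheet hVreg hcover).subset fun p hp hsub => hp ?_
  exact union_subset (hsub.trans hVU) (singleton_subset_iff.2 h0)

/-- In a semiregular pseudocompact semitopological Brandt extension, every open
neighbourhood of zero contains all but finitely many sheets `S_{α,β}`. -/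
theorem brandt_semiregular_pseudocompact_nhds_zero {S lam : Type*} [MonoidWithZero S]
    [TopologicalSpace S] [tB : TopologicalSpace (Brandt S lam)]
    [T2Space (Brandt S lam)]
    (hsep : SepCont (brandtMul (S := S) (lam := lam)))
    (hS : ∀ t : S, Continuous (fun x => t * x) ∧ Continuous (fun x => x * t))
    (alpha : lam) (hemb : Topology.IsEmbedding (brandtIncl (S := S) (lam := lam) alpha))
    (hsr : Semiregular (Brandt S lam)) (hpc : Pseudocompact (Brandt S lam)) :
    ∀ U : Set (Brandt S lam), IsOpen U → none ∈ U →
      {p : lam × lam | ¬ (sheet0 (S := S) p.1 p.2 ⊆ U)}.Finite :=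
  brandt_semiregular_pseudocompact_nhds_zero_general (tB := tB) hsep hsr hpc
end

section
/- Let S be a Hausdorff semitopological monoid with zero and τ_B^S the canonical topology on B⁰_λ(S). Then the tightness of (B⁰_λ(S), τ_B^S) equals the tightness of S: t(B⁰_λ(S), τ_B^S) = t(S). -/
open Topology Set Filter

/-- The tightness of a topological space: the least infinite cardinal `κ` such that
whenever `x ∈ closure A` there is `B ⊆ A` with `#B ≤ κ` and `x ∈ closure B`. -/
noncomputable def tightness (X : Type u) [TopologicalSpace X] : Cardinal.{u} :=
  sInf {κ : Cardinal.{u} | Cardinal.aleph0 ≤ κ ∧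
    ∀ (A : Set X) (x : X), x ∈ closure A →
      ∃ B ⊆ A, Cardinal.mk B ≤ κ ∧ x ∈ closure B}


/-!
Each sheet map `s ↦ (α, s, β)` (sending `0` to the zero) is a topological embedding of `S`
into `B⁰_λ(S)`, and tightness does not increase when passing to a subspace. This gives
`t(S) ≤ t(B⁰_λ(S))`, and also handles every nonzero point, since the sheet through it is open.
At the zero: if `0 ∈ cl A`, then either `0` is in the closure of the trace of `A` on a single
sheet, which is again a question about `S`, or `A` meets infinitely many sheets (otherwise `cl A`
is the finite union of the closures of its traces). In the latter case a countable subset of `A`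
meeting infinitely many sheets already accumulates at `0`, because every neighbourhood of `0`
contains all but finitely many whole sheets.
-/

open Cardinal

def TightnessLE (X : Type u) [TopologicalSpace X] (κ : Cardinal.{u}) : Prop :=
  ∀ (A : Set X) (x : X), x ∈ closure A → ∃ B ⊆ A, #B ≤ κ ∧ x ∈ closure B

namespace Topology.IsInducing

variable {X Y : Type u} [TopologicalSpace X] [TopologicalSpace Y] {f : X → Y}
  {κ : Cardinal.{u}}

theorem tightnessLE (hf : IsInducing f) (h : TightnessLE Y κ) : TightnessLE X κ := by
  intro A x hx
  obtain ⟨B', hB'A, hB'κ, hxB'⟩ :=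
    h (f '' A) (f x) (image_closure_subset_closure_image hf.continuous ⟨x, hx, rfl⟩)
  obtain ⟨B, hBA, hbij⟩ := SurjOn.exists_bijOn_subset hB'A
  refine ⟨B, hBA, ?_, ?_⟩
  · rw [← mk_image_eq_of_injOn f B hbij.injOn, hbij.image_eq]
    exact hB'κ
  · rwa [hf.closure_eq_preimage_closure_image, mem_preimage, hbij.image_eq]

theorem exists_subset_mk_le_mem_closure (hf : IsInducing f) (h : TightnessLE X κ)
    {A : Set Y} {x : X} (hx : f x ∈ closure (A ∩ range f)) :
    ∃ B ⊆ A, #B ≤ κ ∧ f x ∈ closure B := by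
  have hxA : x ∈ closure (f ⁻¹' A) := by
    rwa [hf.closure_eq_preimage_closure_image, mem_preimage, image_preimage_eq_inter_range]
  obtain ⟨C, hCA, hCκ, hxC⟩ := h _ x hxA
  exact ⟨f '' C, image_subset_iff.2 hCA, mk_image_le.trans hCκ,
    image_closure_subset_closure_image hf.continuous (mem_image_of_mem f hxC)⟩

end Topology.IsInducing

attribute [local instance] brandtTop

namespace Brandt

section

variable {S lam : Type*} [Zero S]

open Classical in
noncomputable def single (α β : lam) (s : S) : Brandt S lam :=
  if h : s = 0 then none else some (α, ⟨s, h⟩, β)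

@[simp]
lemma single_zero (α β : lam) : (single α β 0 : Brandt S lam) = none := by
  simp [single]

@[simp]
lemma single_coe (α β : lam) (s : {s : S // s ≠ 0}) :
    (single α β s.1 : Brandt S lam) = some (α, s, β) := by
  simp [single, s.2]

lemma preimage_single_sheetTrace (α β γ δ : lam) (U : Set S) :
    (single α β ⁻¹' sheetTrace γ δ U : Set S) = {_s | γ = α ∧ δ = β} ∩ (U \ {0}) := by
  ext s
  by_cases hs : s = 0
  · simp [sheetTrace, hs]
  · simp [sheetTrace, single, hs]
    tauto

lemma preimage_single_UA0 (α β : lam) (A : Set (lam × lam)) {U : Set S} (h0 : (0 : S) ∈ U) :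
    (single α β ⁻¹' UA0 A U : Set S) = {_s | (α, β) ∉ A} ∪ U := by
  ext s
  by_cases hs : s = 0
  · simp [UA0, hs, h0]
  · simp [UA0, single, hs]

lemma sheet_subset_UA0 {α β : lam} {A : Set (lam × lam)} (h : (α, β) ∉ A) (U : Set S) :
    (sheet α β : Set (Brandt S lam)) ⊆ UA0 A U := by
  rintro x ⟨s, rfl⟩
  exact Or.inr ⟨α, β, s, rfl, Or.inl h⟩

lemma UA0_subset_UA0 {A A' : Set (lam × lam)} {U U' : Set S} (hA : A ⊆ A') (hU : U' ⊆ U) :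
    (UA0 A' U' : Set (Brandt S lam)) ⊆ UA0 A U := by
  rintro x (rfl | ⟨α, β, s, rfl, h⟩)
  · exact Or.inl rfl
  · exact Or.inr ⟨α, β, s, rfl, h.imp (mt (@hA _)) (@hU _)⟩

def sheetsMeeting (A : Set (Brandt S lam)) : Set (lam × lam) :=
  {p | (sheet p.1 p.2 ∩ A).Nonempty}

lemma exists_countable_subset_sheetsMeeting_infinite {A : Set (Brandt S lam)}
    (h : (sheetsMeeting A).Infinite) :
    ∃ B ⊆ A, B.Countable ∧ (sheetsMeeting B).Infinite := by
  let e := h.natEmbedding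
  refine ⟨range fun n => (e n).2.some, range_subset_iff.2 fun n => (e n).2.some_mem.2,
    countable_range _, ?_⟩
  refine (infinite_range_of_injective (Subtype.val_injective.comp e.injective)).mono ?_
  rintro _ ⟨n, rfl⟩
  exact ⟨(e n).2.some, (e n).2.some_mem.1, n, rfl⟩

variable [TopologicalSpace S]

lemma isOpen_sheetTrace (α β : lam) {U : Set S} (hU : IsOpen U) :
    IsOpen (sheetTrace α β U : Set (Brandt S lam)) :=
  TopologicalSpace.isOpen_generateFrom_of_mem (Or.inl ⟨α, β, U, hU, rfl⟩)

lemma isOpen_UA0 {A : Set (lam × lam)} (hA : A.Finite) {U : Set S} (hU : IsOpen U)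
    (h0 : (0 : S) ∈ U) : IsOpen (UA0 A U : Set (Brandt S lam)) :=
  TopologicalSpace.isOpen_generateFrom_of_mem (Or.inr ⟨A, hA, U, hU, h0, rfl⟩)

lemma isInducing_single [T1Space S] (α β : lam) :
    IsInducing (single α β : S → Brandt S lam) := by
  have hcont : Continuous (single α β : S → Brandt S lam) := by
    refine continuous_generateFrom_iff.2 ?_
    rintro W (⟨γ, δ, U, hU, rfl⟩ | ⟨A, -, U, hU, h0, rfl⟩)
    · rw [preimage_single_sheetTrace]
      exact isOpen_const.inter (hU.sdiff isClosed_singleton)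
    · rw [preimage_single_UA0 α β A h0]
      exact isOpen_const.union hU
  refine ⟨le_antisymm (continuous_iff_le_induced.1 hcont) fun V hV => ?_⟩
  by_cases h0 : (0 : S) ∈ V
  · refine isOpen_induced_iff.2 ⟨_, isOpen_UA0 (finite_singleton (α, β)) hV h0, ?_⟩
    simp [preimage_single_UA0 α β _ h0]
  · refine isOpen_induced_iff.2 ⟨_, isOpen_sheetTrace α β hV, ?_⟩
    simp [preimage_single_sheetTrace, h0]

lemma exists_UA0_subset {O : Set (Brandt S lam)} (hO : IsOpen O) (h : none ∈ O) :
    ∃ A U, A.Finite ∧ IsOpen U ∧ (0 : S) ∈ U ∧ UA0 A U ⊆ O := by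
  induction hO with
  | basic W hW =>
    rcases hW with ⟨α, β, U, -, rfl⟩ | ⟨A, hA, U, hU, h0, rfl⟩
    · obtain ⟨s, -, hs⟩ := h
      exact (Option.some_ne_none _ hs.symm).elim
    · exact ⟨A, U, hA, hU, h0, subset_rfl⟩
  | univ => exact ⟨∅, univ, finite_empty, isOpen_univ, mem_univ _, subset_univ _⟩
  | inter W₁ W₂ _ _ ih₁ ih₂ =>
    obtain ⟨A₁, U₁, hA₁, hU₁, h0₁, hsub₁⟩ := ih₁ h.1
    obtain ⟨A₂, U₂, hA₂, hU₂, h0₂, hsub₂⟩ := ih₂ h.2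
    exact ⟨A₁ ∪ A₂, U₁ ∩ U₂, hA₁.union hA₂, hU₁.inter hU₂, ⟨h0₁, h0₂⟩,
      subset_inter ((UA0_subset_UA0 subset_union_left inter_subset_left).trans hsub₁)
        ((UA0_subset_UA0 subset_union_right inter_subset_right).trans hsub₂)⟩
  | sUnion F _ ih =>
    obtain ⟨W, hWF, hW⟩ := h
    obtain ⟨A, U, hA, hU, h0, hsub⟩ := ih W hWF hW
    exact ⟨A, U, hA, hU, h0, hsub.trans (subset_sUnion_of_mem hWF)⟩

lemma none_mem_closure_of_infinite {B : Set (Brandt S lam)} (h : (sheetsMeeting B).Infinite) :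
    none ∈ closure B := by
  refine mem_closure_iff.2 fun O hO hnO => ?_
  obtain ⟨A, U, hA, -, -, hsub⟩ := exists_UA0_subset hO hnO
  obtain ⟨p, ⟨x, hxp, hxB⟩, hpA⟩ := (h.sdiff hA).nonempty
  exact ⟨x, hsub (sheet_subset_UA0 hpA U hxp), hxB⟩

lemma exists_single_or_infinite_of_none_mem_closure [Nonempty lam] {A : Set (Brandt S lam)}
    (hA : none ∈ closure A) :
    (∃ α β, none ∈ closure (A ∩ range (single α β))) ∨ (sheetsMeeting A).Infinite := by
  by_contra! ⟨hsingle, hfin⟩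
  have hcover : A ⊆ ⋃ p ∈ sheetsMeeting A, A ∩ range (single p.1 p.2) := by
    rintro (_ | ⟨α, s, β⟩) hx
    · obtain ⟨α⟩ := ‹Nonempty lam›
      exact (hsingle α α (subset_closure ⟨hx, 0, single_zero α α⟩)).elim
    · exact mem_biUnion (show (α, β) ∈ sheetsMeeting A from ⟨_, ⟨s, rfl⟩, hx⟩)
        ⟨hx, s.1, single_coe α β s⟩
  have hcl := closure_mono hcover hA
  rw [hfin.closure_biUnion, mem_iUnion₂] at hcl
  obtain ⟨p, -, hp⟩ := hcl
  exact hsingle p.1 p.2 hp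

end

theorem tightnessLE {S lam : Type u} [Zero S] [TopologicalSpace S] [T1Space S] [Nonempty lam]
    {κ : Cardinal.{u}} (hκ : ℵ₀ ≤ κ) (h : TightnessLE S κ) : TightnessLE (Brandt S lam) κ := by
  intro A x hx
  rcases x with _ | ⟨α, s, β⟩
  · rcases exists_single_or_infinite_of_none_mem_closure hx with ⟨α, β, hαβ⟩ | hinf
    · rw [← single_zero α β] at hαβ ⊢
      exact (isInducing_single α β).exists_subset_mk_le_mem_closure h hαβ
    · obtain ⟨B, hBA, hBc, hBinf⟩ := exists_countable_subset_sheetsMeeting_infinite hinf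
      exact ⟨B, hBA, hBc.le_aleph0.trans hκ, none_mem_closure_of_infinite hBinf⟩
  · have hsheet : sheetTrace α β univ ∩ A ⊆ A ∩ range (single α β) := by
      rintro _ ⟨⟨t, -, rfl⟩, hA⟩
      exact ⟨hA, t.1, single_coe α β t⟩
    rw [← single_coe α β s] at hx ⊢
    refine (isInducing_single α β).exists_subset_mk_le_mem_closure h (closure_mono hsheet ?_)
    refine (isOpen_sheetTrace α β isOpen_univ).inter_closure ⟨?_, hx⟩
    rw [single_coe]
    exact ⟨s, trivial, rfl⟩

end Brandt

theorem brandt_tightness_general {S lam : Type u} [MonoidWithZero S] [TopologicalSpace S]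
    [T2Space S] [Nonempty lam] :
    @tightness (Brandt S lam) (brandtTop S lam) = tightness S := by
  obtain ⟨α⟩ := ‹Nonempty lam›
  refine congrArg sInf (Set.ext fun κ => and_congr_right fun hκ => ?_)
  exact ⟨(Brandt.isInducing_single α α).tightnessLE, Brandt.tightnessLE hκ⟩

/-- The tightness of the Brandt extension with the canonical topology equals the
tightness of `S`. -/
theorem brandt_tightness {S lam : Type u} [MonoidWithZero S] [TopologicalSpace S]
    [T2Space S] [Nonempty lam] (hsep : SepCont (fun x y : S => x * y)) :
    @tightness (Brandt S lam) (brandtTop S lam) = tightness S :=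
  brandt_tightness_general
end

section
/- Let h : B⁰_{λ}(S) → W be a continuous homomorphism from a topological Brandt λ⁰-extension of a semitopological monoid S with zero into a semitopological semigroup W. Then for all α, β, γ, δ ∈ λ and every nonempty A ⊆ S, the subspaces h(A_{αβ}) and h(A_{γδ}) of W are homeomorphic, where A_{αβ} = {(α,s,β) : s ∈ A, s ≠ 0_S}. -/
open Topology Set Filter

/-! The two-sided translation `w ↦ h(γ,1,α) · w · h(β,1,δ)` carries `h(A_{αβ})` onto `h(A_{γδ})`,
since `(γ,1,α)(α,s,β)(β,1,δ) = (γ,s,δ)`, and the translation by `h(α,1,γ)`, `h(δ,1,β)` undoes it.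
Both translations are continuous because multiplication in `W` is separately continuous.
If `1 = 0` in `S`, all sheets are empty. -/

theorem SepCont.continuous_mul_mul {X : Type*} [TopologicalSpace X] [Mul X]
    (hm : SepCont (fun x y : X => x * y)) (u v : X) : Continuous (fun w => u * w * v) :=
  (hm v).2.comp (hm u).1

theorem sheetTrace_eq_empty {S lam : Type*} [Zero S] [Subsingleton S] (α β : lam) (A : Set S) :
    sheetTrace (lam := lam) α β A = ∅ :=
  eq_empty_of_forall_notMem fun _ ⟨s, _, _⟩ => s.2 (Subsingleton.elim _ _)

section Nontrivial

variable {S lam : Type*} [MonoidWithZero S] [Nontrivial S]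

def brandtUnit (α β : lam) : Brandt S lam := some (α, ⟨1, one_ne_zero⟩, β)

theorem brandtMul_brandtUnit_left (γ α β : lam) (s : {s : S // s ≠ 0}) :
    brandtMul (brandtUnit γ α) (some (α, s, β)) = some (γ, s, β) := by
  simp [brandtMul, brandtUnit, s.2]

theorem brandtMul_brandtUnit_right (α β δ : lam) (s : {s : S // s ≠ 0}) :
    brandtMul (some (α, s, β)) (brandtUnit β δ) = some (α, s, δ) := by
  simp [brandtMul, brandtUnit, s.2]

variable {W : Type*} [Semigroup W] {h : Brandt S lam → W}

theorem map_brandtUnit_mul_mul_brandtUnit (hhom : ∀ x y, h (brandtMul x y) = h x * h y)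
    (α β γ δ : lam) (s : {s : S // s ≠ 0}) :
    h (brandtUnit γ α) * h (some (α, s, β)) * h (brandtUnit β δ) = h (some (γ, s, δ)) := by
  rw [← hhom, ← hhom, brandtMul_brandtUnit_left, brandtMul_brandtUnit_right]

theorem mapsTo_image_sheetTrace (hhom : ∀ x y, h (brandtMul x y) = h x * h y)
    (A : Set S) (α β γ δ : lam) :
    MapsTo (fun w => h (brandtUnit γ α) * w * h (brandtUnit β δ))
      (h '' sheetTrace α β A) (h '' sheetTrace γ δ A) := by
  rintro _ ⟨_, ⟨s, hs, rfl⟩, rfl⟩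
  exact ⟨some (γ, s, δ), ⟨s, hs, rfl⟩, (map_brandtUnit_mul_mul_brandtUnit hhom α β γ δ s).symm⟩

theorem leftInvOn_image_sheetTrace (hhom : ∀ x y, h (brandtMul x y) = h x * h y)
    (A : Set S) (α β γ δ : lam) :
    LeftInvOn (fun w => h (brandtUnit α γ) * w * h (brandtUnit δ β))
      (fun w => h (brandtUnit γ α) * w * h (brandtUnit β δ)) (h '' sheetTrace α β A) := by
  rintro _ ⟨_, ⟨s, -, rfl⟩, rfl⟩
  simp only [map_brandtUnit_mul_mul_brandtUnit hhom]

variable [TopologicalSpace W]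

def imageSheetTracePartialHomeomorph (hsepW : SepCont (fun x y : W => x * y))
    (hhom : ∀ x y, h (brandtMul x y) = h x * h y) (A : Set S) (α β γ δ : lam) :
    PartialHomeomorph W W where
  toFun w := h (brandtUnit γ α) * w * h (brandtUnit β δ)
  invFun w := h (brandtUnit α γ) * w * h (brandtUnit δ β)
  source := h '' sheetTrace α β A
  target := h '' sheetTrace γ δ A
  map_source' := mapsTo_image_sheetTrace hhom A α β γ δ
  map_target' := mapsTo_image_sheetTrace hhom A γ δ α β
  left_inv' := leftInvOn_image_sheetTrace hhom A α β γ δ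
  right_inv' := leftInvOn_image_sheetTrace hhom A γ δ α β
  continuousOn_toFun := (hsepW.continuous_mul_mul _ _).continuousOn
  continuousOn_invFun := (hsepW.continuous_mul_mul _ _).continuousOn

end Nontrivial

theorem brandt_image_sheets_homeomorphic_general {S lam W : Type*} [MonoidWithZero S]
    [Semigroup W] [TopologicalSpace W]
    (hsepW : SepCont (fun x y : W => x * y))
    (h : Brandt S lam → W)
    (hhom : ∀ x y : Brandt S lam, h (brandtMul x y) = h x * h y)
    (A : Set S) (α β γ δ : lam) :
    Nonempty (↥(h '' sheetTrace α β A) ≃ₜ ↥(h '' sheetTrace γ δ A)) := by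
  cases subsingleton_or_nontrivial S
  · rw [sheetTrace_eq_empty, sheetTrace_eq_empty]
    exact ⟨Homeomorph.refl _⟩
  · exact ⟨(imageSheetTracePartialHomeomorph hsepW hhom A α β γ δ).toHomeomorphSourceTarget⟩

/-- For a continuous homomorphism `h` from a topological Brandt extension into a
semitopological semigroup `W`, the images `h(A_{α,β})` and `h(A_{γ,δ})` are
homeomorphic subspaces of `W`. -/
theorem brandt_image_sheets_homeomorphic {S lam W : Type*} [MonoidWithZero S]
    [Semigroup W] [tB : TopologicalSpace (Brandt S lam)] [TopologicalSpace W]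
    (hsepB : SepCont (brandtMul (S := S) (lam := lam)))
    (hsepW : SepCont (fun x y : W => x * y))
    (h : Brandt S lam → W) (hc : Continuous h)
    (hhom : ∀ x y : Brandt S lam, h (brandtMul x y) = h x * h y)
    (A : Set S) (hA : A.Nonempty) (α β γ δ : lam) :
    Nonempty (↥(h '' sheetTrace α β A) ≃ₜ ↥(h '' sheetTrace γ δ A)) :=
  brandt_image_sheets_homeomorphic_general hsepW h hhom A α β γ δ
end
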